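/- Let M = (𝓔, 𝓕) be a rank-3 simple matroid, let (E₁, E₂, E₃) be a basis of M, and let E ∈ 𝓔 be any element. Then there exist indices i ≠ j in {1, 2, 3} such that E, E_i, E_j are pairwise distinct and form a basis of M. -/

import Mathlib

/-- A rank-3 simple matroid: a finite set of elements together with a collection of
flats (subsets of the element set) such that every pair of distinct elements is
contained in exactly one flat, and there are at least two distinct flats. -/
structure RankThreeMatroid (α : Type*) where
  elts : Finset α
  flats : Finset (Finset α)
  flats_subset : ∀ f ∈ flats, f ⊆ elts
  existsUnique_flat : ∀ e₁ ∈ elts, ∀ e₂ ∈ elts, e₁ ≠ e₂ →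
    ∃! f, f ∈ flats ∧ e₁ ∈ f ∧ e₂ ∈ f
  two_flats : ∃ f₁ ∈ flats, ∃ f₂ ∈ flats, f₁ ≠ f₂

/-- Three pairwise distinct elements `e₁, e₂, e₃` form a basis when the flats
`F₁₂`, `F₁₃`, `F₂₃` determined by the three pairs are pairwise distinct. -/
def RankThreeMatroid.IsBasis {α : Type*} (M : RankThreeMatroid α) (e₁ e₂ e₃ : α) : Prop :=
  e₁ ∈ M.elts ∧ e₂ ∈ M.elts ∧ e₃ ∈ M.elts ∧ e₁ ≠ e₂ ∧ e₁ ≠ e₃ ∧ e₂ ≠ e₃ ∧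
  ∃ f₁₂ f₁₃ f₂₃ : Finset α,
    (f₁₂ ∈ M.flats ∧ e₁ ∈ f₁₂ ∧ e₂ ∈ f₁₂) ∧
    (f₁₃ ∈ M.flats ∧ e₁ ∈ f₁₃ ∧ e₃ ∈ f₁₃) ∧
    (f₂₃ ∈ M.flats ∧ e₂ ∈ f₂₃ ∧ e₃ ∈ f₂₃) ∧
    f₁₂ ≠ f₁₃ ∧ f₁₂ ≠ f₂₃ ∧ f₁₃ ≠ f₂₃

/-!
Two distinct flats share at most one element, so no element lies on all three sides
`F₀₁, F₀₂, F₁₂` of the basis triangle. If `e` avoids the side through `b i, b j`, then the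
three flats through pairs of `e, b i, b j` are distinct: the two through `e` miss that side,
and they differ because one flat through `e, b i, b j` would be that side.
-/

namespace RankThreeMatroid

variable {α : Type*} (M : RankThreeMatroid α)

theorem flat_eq_of_mem {f g : Finset α} (hf : f ∈ M.flats) (hg : g ∈ M.flats) {x y : α}
    (hxy : x ≠ y) (hxf : x ∈ f) (hyf : y ∈ f) (hxg : x ∈ g) (hyg : y ∈ g) : f = g :=
  (M.existsUnique_flat x (M.flats_subset f hf hxf) y (M.flats_subset f hf hyf) hxy).unique
    ⟨hf, hxf, hyf⟩ ⟨hg, hxg, hyg⟩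

theorem isBasis_of_notMem {f : Finset α} (hf : f ∈ M.flats) {e x y : α} (he : e ∈ M.elts)
    (hxy : x ≠ y) (hxf : x ∈ f) (hyf : y ∈ f) (hef : e ∉ f) : M.IsBasis e x y := by
  have hx := M.flats_subset f hf hxf
  have hy := M.flats_subset f hf hyf
  have hex : e ≠ x := fun h => hef (h ▸ hxf)
  have hey : e ≠ y := fun h => hef (h ▸ hyf)
  obtain ⟨gx, ⟨hgx, hegx, hxgx⟩, -⟩ := M.existsUnique_flat e he x hx hex
  obtain ⟨gy, ⟨hgy, hegy, hygy⟩, -⟩ := M.existsUnique_flat e he y hy hey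
  refine ⟨he, hx, hy, hex, hey, hxy, gx, gy, f, ⟨hgx, hegx, hxgx⟩, ⟨hgy, hegy, hygy⟩,
    ⟨hf, hxf, hyf⟩, ?_, fun h => hef (h ▸ hegx), fun h => hef (h ▸ hegy)⟩
  rintro rfl
  exact hef (M.flat_eq_of_mem hgx hf hxy hxgx hygy hxf hyf ▸ hegx)

variable {M} in
theorem IsBasis.exists_side_notMem {b : Fin 3 → α} (hb : M.IsBasis (b 0) (b 1) (b 2))
    (e : α) : ∃ i j, b i ≠ b j ∧ ∃ f ∈ M.flats, b i ∈ f ∧ b j ∈ f ∧ e ∉ f := by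
  obtain ⟨-, -, -, h01, h02, h12, f01, f02, f12, ⟨hf01, h0f01, h1f01⟩,
    ⟨hf02, h0f02, h2f02⟩, ⟨hf12, h1f12, h2f12⟩, hne₁, hne₂, -⟩ := hb
  by_contra! h
  have he01 := h 0 1 h01 f01 hf01 h0f01 h1f01
  have he02 := h 0 2 h02 f02 hf02 h0f02 h2f02
  have he12 := h 1 2 h12 f12 hf12 h1f12 h2f12
  have he0 : e = b 0 := by
    by_contra hne
    exact hne₁ (M.flat_eq_of_mem hf01 hf02 hne he01 h0f01 he02 h0f02)
  have he1 : e = b 1 := by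
    by_contra hne
    exact hne₂ (M.flat_eq_of_mem hf01 hf12 hne he01 h1f01 he12 h1f12)
  exact h01 (he0.symm.trans he1)

end RankThreeMatroid

/-- Given a basis `b 0, b 1, b 2` of a rank-3 simple matroid and any element `e`,
there are two indices `i ≠ j` such that `e, b i, b j` are pairwise distinct and
form a basis. (Pairwise distinctness is part of `IsBasis`.) -/
theorem element_forms_basis_with_two_of_basis {α : Type*} (M : RankThreeMatroid α)
    (b : Fin 3 → α) (hb : M.IsBasis (b 0) (b 1) (b 2)) (e : α) (he : e ∈ M.elts) :
    ∃ i j : Fin 3, i ≠ j ∧ M.IsBasis e (b i) (b j) := by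
  obtain ⟨i, j, hij, f, hf, hif, hjf, hef⟩ := hb.exists_side_notMem e
  exact ⟨i, j, ne_of_apply_ne b hij, M.isBasis_of_notMem hf he hij hif hjf hef⟩
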